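/- arXiv:2602.01478 — 3 statements merged into one kernel-verified Lean document; each statement's English description precedes it below -/
import Mathlib

section
/- Every rapid P-point is a Laver ultrafilter. -/
/-- A partition of a set `S` into finitely many (nonempty, pairwise disjoint) pieces
covering everything. -/
def IsFinPartition {S : Type*} (P : Set (Set S)) : Prop :=
  P.Finite ∧ ∅ ∉ P ∧ ⋃₀ P = Set.univ ∧ P.Pairwise Disjoint

/-- A Laver ultrafilter. -/
def IsLaverUltrafilter {S : Type*} (U : Ultrafilter S) : Prop :=
  Filter.cofinite ≤ (U : Filter S) ∧
  ∀ P : ℕ → Set (Set S), (∀ n, IsFinPartition (P n)) →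
    ∃ x ∈ U, ∀ n, {p ∈ P n | (x ∩ p).Nonempty}.ncard ≤ n + 1

/-- A rapid ultrafilter. -/
def IsRapid (U : Ultrafilter ℕ) : Prop :=
  ∀ f : ℕ → ℕ, StrictMono f → ∃ x ∈ U, ∀ n, (x ∩ {k | k < f n}).ncard ≤ n

/-- A P-point. -/
def IsPPoint (U : Ultrafilter ℕ) : Prop :=
  ∀ x : ℕ → Set ℕ, (∀ n, x n ∈ U) → ∃ y ∈ U, ∀ n, (y \ x n).Finite

/-!
Given partitions `P n`, let `p n ∈ U` be the piece of `P n` chosen by `U`. The P-point property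
gives `y ∈ U` with `y \ p n` finite, say below `g n`; rapidity for some strictly increasing
`f > g` gives `x ∈ U` with at most `n` points below `f n`. Then `x ∩ y` meets, besides `p n`,
only pieces containing a point of `(x ∩ y) \ p n ⊆ x ∩ [0, f n)`, so at most `n + 1` pieces.
-/

open Set

theorem IsFinPartition.exists_mem_ultrafilter {S : Type*} {P : Set (Set S)}
    (hP : IsFinPartition P) (U : Ultrafilter S) : ∃ p ∈ P, p ∈ U :=
  (Ultrafilter.finite_sUnion_mem_iff hP.1).mp (by rw [hP.2.2.1]; exact Filter.univ_mem)

/-- Every piece other than `p` that meets `z` is the piece of some point of `z \ p`. -/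
theorem ncard_pieces_meeting_le {S : Type*} {P : Set (Set S)} (hcover : ⋃₀ P = univ)
    (hdisj : P.Pairwise Disjoint) {p : Set S} (hp : p ∈ P) (z : Set S) (hz : (z \ p).Finite) :
    {q ∈ P | (z ∩ q).Nonempty}.ncard ≤ (z \ p).ncard + 1 := by
  have hpiece : ∀ k : S, ∃ q ∈ P, k ∈ q := fun k => by
    simpa only [← mem_sUnion, hcover] using mem_univ k
  choose piece hpieceP hmem_piece using hpiece
  have hsub : {q ∈ P | (z ∩ q).Nonempty} ⊆ insert p (piece '' (z \ p)) := by
    rintro q ⟨hqP, k, hkz, hkq⟩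
    by_cases hqp : q = p
    · exact Or.inl hqp
    have hkp : k ∉ p := fun hkp => (hdisj hqP hp hqp).ne_of_mem hkq hkp rfl
    have hpiece_k : piece k = q := by
      by_contra hne
      exact (hdisj (hpieceP k) hqP hne).ne_of_mem (hmem_piece k) hkq rfl
    exact Or.inr ⟨k, ⟨hkz, hkp⟩, hpiece_k⟩
  calc {q ∈ P | (z ∩ q).Nonempty}.ncard ≤ (insert p (piece '' (z \ p))).ncard :=
        ncard_le_ncard hsub ((hz.image piece).insert p)
    _ ≤ (piece '' (z \ p)).ncard + 1 := ncard_insert_le _ _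
    _ ≤ (z \ p).ncard + 1 := Nat.add_le_add_right (ncard_image_le hz) 1

theorem exists_strictMono_gt (g : ℕ → ℕ) : ∃ f : ℕ → ℕ, StrictMono f ∧ ∀ n, g n < f n := by
  refine ⟨fun n => ∑ i ∈ Finset.range (n + 1), (g i + 1), strictMono_nat_of_lt_succ fun n => ?_,
    fun n => ?_⟩
  · simp only [Finset.sum_range_succ _ (n + 1)]
    omega
  · simp only [Finset.sum_range_succ]
    omega

theorem stmt_5 (U : Ultrafilter ℕ) (hU : Filter.cofinite ≤ (U : Filter ℕ))
    (hrapid : IsRapid U) (hP : IsPPoint U) :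
    IsLaverUltrafilter U := by
  refine ⟨hU, fun P hPart => ?_⟩
  choose p hpP hpU using fun n => (hPart n).exists_mem_ultrafilter U
  obtain ⟨y, hyU, hy⟩ := hP p hpU
  choose g hg using fun n => (hy n).bddAbove
  obtain ⟨f, hf_mono, hgf⟩ := exists_strictMono_gt g
  obtain ⟨x, hxU, hx⟩ := hrapid f hf_mono
  refine ⟨x ∩ y, Filter.inter_mem hxU hyU, fun n => ?_⟩
  have hsub : (x ∩ y) \ p n ⊆ x ∩ {k | k < f n} := fun k ⟨⟨hkx, hky⟩, hkp⟩ =>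
    ⟨hkx, (hg n ⟨hky, hkp⟩).trans_lt (hgf n)⟩
  have hfin : (x ∩ {k | k < f n}).Finite := (finite_lt_nat (f n)).inter_of_right x
  calc {q ∈ P n | (x ∩ y ∩ q).Nonempty}.ncard ≤ ((x ∩ y) \ p n).ncard + 1 :=
        ncard_pieces_meeting_le (hPart n).2.2.1 (hPart n).2.2.2 (hpP n) _ (hfin.subset hsub)
    _ ≤ (x ∩ {k | k < f n}).ncard + 1 := Nat.add_le_add_right (ncard_le_ncard hsub hfin) 1
    _ ≤ n + 1 := Nat.add_le_add_right (hx n) 1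
end

section
/- For every f ∈ H, every set A ⊆ 2^ω with A ∈ I_f has topological closure that is nowhere dense and of measure zero with respect to the fair-coin product probability measure on 2^ω. -/
/-- `level A n` is the number of distinct restrictions to `n` of elements of `A ⊆ 2^ω`. -/
noncomputable def level (A : Set (ℕ → Bool)) (n : ℕ) : ℕ :=
  ((fun x : ℕ → Bool => (fun i : Fin n => x i)) '' A).ncard

/-- The class `H` of non-decreasing, unbounded `f : ℕ → ℕ` with `f n ≤ n`. -/
def memH (f : ℕ → ℕ) : Prop :=
  Monotone f ∧ (∀ m : ℕ, ∃ n, m ≤ f n) ∧ ∀ n, f n ≤ n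

/-- The ideal `I_f` on `2^ω`. -/
def idealI (f : ℕ → ℕ) : Set (Set (ℕ → Bool)) :=
  {A | ∀ d : ℕ, 1 ≤ d → ∀ᶠ n in Filter.atTop, d * level A n ≤ f n}

/-- The basic clopen set `[s]` of branches through the finite binary sequence `s`. -/
def cylinder (s : List Bool) : Set (ℕ → Bool) :=
  {x | ∀ i : Fin s.length, x i = s.get i}

/-- `μ` is the fair-coin product probability measure on `2^ω`: it is a probability
measure giving each basic clopen set `[s]` measure `2^{-|s|}`. -/
def IsFairCoinMeasure (μ : MeasureTheory.Measure (ℕ → Bool)) : Prop :=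
  MeasureTheory.IsProbabilityMeasure μ ∧
  ∀ s : List Bool, μ (cylinder s) = (2 : ENNReal)⁻¹ ^ s.length

/-!
Closing `A` adds no new prefixes, so the closure of `A` is covered by `level A n` basic clopen
sets of length `n` and has measure at most `level A n * 2⁻ⁿ`. For `A ∈ I_f` this is eventually
at most `f n * 2⁻ⁿ ≤ n * 2⁻ⁿ → 0`. A closed null set is nowhere dense because the fair-coin
measure charges every nonempty open set, each of which contains a basic clopen set.
-/

open MeasureTheory Filter Topology
open scoped ENNReal

-- `level A n` is `(truncate n '' A).ncard` definitionally.
def truncate (n : ℕ) (x : ℕ → Bool) : Fin n → Bool := fun i => x i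

lemma continuous_truncate (n : ℕ) : Continuous (truncate n) :=
  continuous_pi fun i => continuous_apply (i : ℕ)

lemma measurable_truncate (n : ℕ) : Measurable (truncate n) :=
  measurable_pi_lambda _ fun i => measurable_pi_apply (i : ℕ)

lemma cylinder_ofFn {n : ℕ} (v : Fin n → Bool) :
    _root_.cylinder (List.ofFn v) = truncate n ⁻¹' {v} := by
  ext x
  simp only [_root_.cylinder, List.get_ofFn, Set.mem_ofPred_eq,
    Set.mem_preimage, Set.mem_singleton_iff, funext_iff, truncate]
  exact (Fin.castOrderIso List.length_ofFn).toEquiv.forall_congr fun {i} => by simp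

lemma PiNat.cylinder_eq_truncate_preimage (x : ℕ → Bool) (n : ℕ) :
    PiNat.cylinder x n = truncate n ⁻¹' {truncate n x} := by
  ext y
  simp [PiNat.mem_cylinder_iff, funext_iff, truncate, Fin.forall_iff]

lemma closure_subset_truncate_preimage_image (A : Set (ℕ → Bool)) (n : ℕ) :
    closure A ⊆ truncate n ⁻¹' (truncate n '' A) :=
  closure_minimal (Set.subset_preimage_image _ _)
    ((isClosed_discrete _).preimage (continuous_truncate n))

lemma ENNReal.tendsto_nat_mul_inv_two_pow :
    Tendsto (fun n : ℕ => (n : ℝ≥0∞) * 2⁻¹ ^ n) atTop (𝓝 0) := by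
  have h := ENNReal.tendsto_ofReal
    (tendsto_self_mul_const_pow_of_lt_one (r := 2⁻¹) (by norm_num) (by norm_num))
  rw [ENNReal.ofReal_zero] at h
  refine h.congr fun n => ?_
  rw [ENNReal.ofReal_mul (by positivity), ENNReal.ofReal_pow (by norm_num),
    ENNReal.ofReal_natCast, ENNReal.ofReal_inv_of_pos (by norm_num), ENNReal.ofReal_ofNat]

namespace IsFairCoinMeasure

variable {μ : Measure (ℕ → Bool)}

lemma measure_truncate_preimage_singleton (hμ : IsFairCoinMeasure μ) {n : ℕ} (v : Fin n → Bool) :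
    μ (truncate n ⁻¹' {v}) = 2⁻¹ ^ n := by
  rw [← cylinder_ofFn, hμ.2, List.length_ofFn]

lemma measure_truncate_preimage (hμ : IsFairCoinMeasure μ) {n : ℕ}
    (S : Set (Fin n → Bool)) :
    μ (truncate n ⁻¹' S) = S.ncard * 2⁻¹ ^ n := by
  classical
  lift S to Finset (Fin n → Bool) using S.toFinite
  rw [← sum_measure_preimage_singleton _ fun v _ => measurable_truncate n (.singleton v),
    Finset.sum_congr rfl fun v _ => hμ.measure_truncate_preimage_singleton v, Finset.sum_const,
    nsmul_eq_mul, Set.ncard_coe_finset]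

lemma measure_closure_le_level (hμ : IsFairCoinMeasure μ) (A : Set (ℕ → Bool)) (n : ℕ) :
    μ (closure A) ≤ level A n * 2⁻¹ ^ n :=
  calc μ (closure A) ≤ μ (truncate n ⁻¹' (truncate n '' A)) :=
        measure_mono (closure_subset_truncate_preimage_image A n)
    _ = level A n * 2⁻¹ ^ n := hμ.measure_truncate_preimage _

lemma measure_closure_eq_zero_of_level_le (hμ : IsFairCoinMeasure μ) {A : Set (ℕ → Bool)}
    (hA : ∀ᶠ n in atTop, level A n ≤ n) : μ (closure A) = 0 :=
  le_antisymm (ge_of_tendsto ENNReal.tendsto_nat_mul_inv_two_pow <| hA.mono fun n hn =>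
    (hμ.measure_closure_le_level A n).trans (by gcongr)) zero_le

lemma isOpenPosMeasure (hμ : IsFairCoinMeasure μ) : μ.IsOpenPosMeasure where
  open_pos U hU := fun ⟨x, hx⟩ hU0 => by
    obtain ⟨_, ⟨y, n, rfl⟩, -, hsub⟩ :=
      (PiNat.isTopologicalBasis_cylinders _).exists_subset_of_mem_open hx hU
    have hcyl := measure_mono_null hsub hU0
    rw [PiNat.cylinder_eq_truncate_preimage, hμ.measure_truncate_preimage_singleton] at hcyl
    exact pow_ne_zero n (ENNReal.inv_ne_zero.2 ENNReal.ofNat_ne_top) hcyl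

end IsFairCoinMeasure

theorem stmt_11 (f : ℕ → ℕ) (hf : memH f) (A : Set (ℕ → Bool)) (hA : A ∈ idealI f)
    (μ : MeasureTheory.Measure (ℕ → Bool)) (hμ : IsFairCoinMeasure μ) :
    IsNowhereDense (closure A) ∧ μ (closure A) = 0 := by
  have hlevel : ∀ᶠ n in atTop, level A n ≤ n :=
    (hA 1 le_rfl).mono fun n hn => (one_mul (level A n) ▸ hn).trans (hf.2.2 n)
  have hnull := hμ.measure_closure_eq_zero_of_level_le hlevel
  have := hμ.isOpenPosMeasure
  exact ⟨.of_isClosed_null isClosed_closure hnull, hnull⟩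
end

section
/- Let κ be a cardinal with κ < 𝔤𝔢(Laver) := min{𝔤𝔢(I_f) : f ∈ H}. Then for every h : ℕ → ℕ \ {0} and every family 𝒟 ⊆ ∏_{n∈ℕ} h(n) of cardinality κ, there exists u ∈ ∏_{n∈ℕ} h(n) such that for every x ∈ 𝒟 the set {n ∈ ℕ : u(n) = x(n)} is infinite. Consequently 𝔤𝔢(Laver) ≤ non(𝒮𝒩). -/
/-- `ℚ ⊆ 2^ω`: the set of eventually-zero binary sequences. -/
def QSet : Set (ℕ → Bool) := {x | ∀ᶠ n in Filter.atTop, x n = false}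

/-- The ideal `I_f`, viewed as an ideal on the countable set `ℚ ⊆ 2^ω`. -/
def idealIQ (f : ℕ → ℕ) : Set (Set (ℕ → Bool)) :=
  {A | A ⊆ QSet ∧ ∀ d : ℕ, 1 ≤ d → ∀ᶠ n in Filter.atTop, d * level A n ≤ f n}

/-- A filter base of subsets of `ℚ`. -/
def IsFilterBaseQ (F : Set (Set (ℕ → Bool))) : Prop :=
  F.Nonempty ∧ (∀ A ∈ F, A ⊆ QSet) ∧ ∀ A ∈ F, ∀ B ∈ F, ∃ C ∈ F, C ⊆ A ∩ B

/-- The generic existence number `𝔤𝔢(I_f)`. -/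
noncomputable def geI (f : ℕ → ℕ) : Cardinal :=
  sInf {c : Cardinal | ∃ F : Set (Set (ℕ → Bool)), IsFilterBaseQ F ∧
    (∀ A ∈ F, A ∉ idealIQ f) ∧ (∀ I ∈ idealIQ f, ∃ A ∈ F, (I ∩ A).Finite) ∧
    Cardinal.mk F = c}

/-- `𝔤𝔢(Laver) := min {𝔤𝔢(I_f) : f ∈ H}`. -/
noncomputable def geLaver : Cardinal :=
  sInf {c : Cardinal | ∃ f : ℕ → ℕ, memH f ∧ geI f = c}

/-- `X ⊆ 2^ω` has strong measure zero. -/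
def HasSMZ (X : Set (ℕ → Bool)) : Prop :=
  ∀ g : ℕ → ℕ, ∃ σ : ℕ → List Bool, (∀ n, (σ n).length = g n) ∧ X ⊆ ⋃ n, cylinder (σ n)

/-- `non(𝒮𝒩)`: the least cardinality of a subset of `2^ω` without strong measure zero. -/
noncomputable def nonSN : Cardinal :=
  sInf {c : Cardinal | ∃ X : Set (ℕ → Bool), ¬ HasSMZ X ∧ Cardinal.mk X = c}

/-!
Fix `h` and cut binary sequences into consecutive blocks, block `m` of length `h m + 1`, and let
`f n` count the blocks that fit into `[0, n)`; then `f ∈ H`. For a finite `E ⊆ D`, let `A_E` be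
the set of sequences in `ℚ` that end with block `m` and code in it a set `S ∋ x m` (`x ∈ E`) with
`|S| ≤ m`. These sets are `I_f`-positive (their levels are full) and form a filter base of size
`|D|`, so if `|D| < 𝔤𝔢(I_f)` some `I ∈ I_f` meets every `A_E` in an infinite set. As
`level_I ≤ f` eventually, at most `m + 1` elements of `I` end with block `m`, and the sets they
code form a slalom of width `(m + 1) m` that catches every `x ∈ D` infinitely often.

Such slaloms give infinitely equal reals: group the coordinates into blocks
`{⟨k, j⟩ : j < (k + 1) k}` and apply the above to the codes of the blocks of `x ∈ D`; at
coordinate `⟨k, i⟩`, `u` copies the `i`-th coordinate of the block coded by the `i`-th element of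
the `k`-th slalom set. Finally, for strong measure zero, apply this with `h n = 2 ^ g n` to the
initial segments `x ↾ g n`.
-/

open Set Filter Cardinal

def SlalomCatches (w : ℕ → ℕ) (D : Set (ℕ → ℕ)) : Prop :=
  ∃ S : ℕ → Finset ℕ, (∀ m, (S m).card ≤ w m) ∧ ∀ x ∈ D, {m | x m ∈ S m}.Infinite

lemma slalomCatches_of_finite {w : ℕ → ℕ} (hw : Tendsto w atTop atTop) {D : Set (ℕ → ℕ)}
    (hD : D.Finite) : SlalomCatches w D := by
  classical
  let S m := if hD.toFinset.card ≤ w m then hD.toFinset.image (· m) else ∅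
  refine ⟨S, fun m => ?_, fun x hx => ?_⟩
  · dsimp only [S]
    split_ifs with hm
    · exact Finset.card_image_le.trans hm
    · simp
  · rw [← Nat.frequently_atTop_iff_infinite]
    refine ((tendsto_atTop.1 hw hD.toFinset.card).mono fun m hm => ?_).frequently
    simp only [S, if_pos hm]
    exact Finset.mem_image_of_mem _ (hD.mem_toFinset.2 hx)

section BlockCode

variable (w : ℕ → ℕ)

def blockCode (x : ℕ → ℕ) (k : ℕ) : ℕ :=
  Encodable.encode (List.ofFn fun j : Fin (w k) => x (Nat.pair k j))

lemma exists_blockCode_lt (h : ℕ → ℕ) :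
    ∃ h' : ℕ → ℕ, ∀ x : ℕ → ℕ, (∀ n, x n < h n) → ∀ k, blockCode w x k < h' k := by
  have hbound : ∀ k, ∃ b, ∀ x : ℕ → ℕ, (∀ n, x n < h n) → blockCode w x k < b := by
    intro k
    obtain ⟨b, hb⟩ := ((Set.Finite.pi fun j : Fin (w k) => finite_Iio (h (Nat.pair k j))).image
      fun v => Encodable.encode (List.ofFn v)).bddAbove
    exact ⟨b + 1, fun x hx => Nat.lt_succ_of_le (hb ⟨_, fun j _ => hx _, rfl⟩)⟩
  choose h' hh' using hbound
  exact ⟨h', fun x hx k => hh' k x hx⟩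

/-- At `Nat.pair k i`: coordinate `i` of the block coded by the `i`-th element of `S k`,
clamped below `h`. -/
noncomputable def slalomDiagonal (h : ℕ → ℕ) (S : ℕ → Finset ℕ) (n : ℕ) : ℕ :=
  min ((Denumerable.ofNat (List ℕ) ((S n.unpair.1).toList.getD n.unpair.2 0)).getD n.unpair.2 0)
    (h n - 1)

variable {w}

lemma slalomDiagonal_pair {h : ℕ → ℕ} {S : ℕ → Finset ℕ} {x : ℕ → ℕ} {k i : ℕ}
    (hi : i < (S k).toList.length) (hcode : (S k).toList[i] = blockCode w x k) (hiw : i < w k)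
    (hx : x (Nat.pair k i) < h (Nat.pair k i)) :
    slalomDiagonal h S (Nat.pair k i) = x (Nat.pair k i) := by
  simp only [slalomDiagonal, Nat.unpair_pair]
  rw [List.getD_eq_getElem _ _ hi, hcode, blockCode, Denumerable.ofNat_encode,
    List.getD_eq_getElem _ _ (by simpa using hiw), List.getElem_ofFn]
  exact min_eq_left (Nat.le_sub_one_of_lt hx)

theorem exists_infinitelyEqual_of_slalomCatches {h : ℕ → ℕ} (hpos : ∀ n, 0 < h n)
    {D : Set (ℕ → ℕ)} (hD : ∀ x ∈ D, ∀ n, x n < h n) (hcatch : SlalomCatches w (blockCode w '' D)) :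
    ∃ u : ℕ → ℕ, (∀ n, u n < h n) ∧ ∀ x ∈ D, {n | u n = x n}.Infinite := by
  obtain ⟨S, hS, hcaught⟩ := hcatch
  refine ⟨slalomDiagonal h S, fun n => (min_le_right _ _).trans_lt (by have := hpos n; omega),
    fun x hx => ?_⟩
  let position k := Nat.pair k ((S k).toList.idxOf (blockCode w x k))
  have hinj : InjOn position {k | blockCode w x k ∈ S k} := fun k _ k' _ he => by
    simpa [position] using congrArg (fun n => n.unpair.1) he
  refine ((hcaught _ ⟨x, hx, rfl⟩).image hinj).mono ?_
  rintro _ ⟨k, hk, rfl⟩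
  have hi := List.idxOf_lt_length_iff.2 (Finset.mem_toList.2 hk)
  exact slalomDiagonal_pair hi (List.getElem_idxOf hi)
    (hi.trans_le ((Finset.length_toList _).trans_le (hS k))) (hD x hx _)

end BlockCode

lemma exists_mem_idealIQ_infinite_inter {f : ℕ → ℕ} {F : Set (Set (ℕ → Bool))}
    (hF : IsFilterBaseQ F) (hpos : ∀ A ∈ F, A ∉ idealIQ f) (hlt : #F < geI f) :
    ∃ I ∈ idealIQ f, ∀ A ∈ F, (I ∩ A).Infinite := by
  by_contra! hcover
  exact hlt.not_ge (csInf_le' ⟨F, hF, hpos, hcover, rfl⟩)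

def VanishesFrom (N : ℕ) (z : ℕ → Bool) : Prop := ∀ n, N ≤ n → z n = false

lemma VanishesFrom.mem_QSet {N : ℕ} {z : ℕ → Bool} (hz : VanishesFrom N z) : z ∈ QSet :=
  eventually_atTop.2 ⟨N, hz⟩

lemma injOn_restrict_vanishesFrom (N : ℕ) :
    InjOn (fun z : ℕ → Bool => fun i : Fin N => z i) {z | VanishesFrom N z} := by
  intro z hz z' hz' hzz'
  funext n
  by_cases hn : n < N
  · exact congrFun hzz' ⟨n, hn⟩
  · rw [hz n (not_lt.1 hn), hz' n (not_lt.1 hn)]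

lemma finite_vanishesFrom (N : ℕ) : {z | VanishesFrom N z}.Finite :=
  (toFinite _).of_finite_image (injOn_restrict_vanishesFrom N)

lemma ncard_inter_vanishesFrom_le_level (I : Set (ℕ → Bool)) (N : ℕ) :
    (I ∩ {z | VanishesFrom N z}).ncard ≤ level I N := by
  rw [level, ← ((injOn_restrict_vanishesFrom N).mono inter_subset_right).ncard_image]
  exact ncard_le_ncard (image_mono inter_subset_left) (toFinite _)

section Blocks

variable (h : ℕ → ℕ)

def blockStart : ℕ → ℕ
  | 0 => 0
  | m + 1 => blockStart m + (h m + 1)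

lemma blockStart_strictMono : StrictMono (blockStart h) :=
  strictMono_nat_of_lt_succ fun m => by simp [blockStart]

/-- The number of blocks contained in `[0, n)`. -/
def completeBlocks (n : ℕ) : ℕ := Nat.findGreatest (fun m => blockStart h m ≤ n) n

lemma memH_completeBlocks : memH (completeBlocks h) :=
  ⟨fun _ _ hnn => Nat.findGreatest_mono (fun _ hm => hm.trans hnn) hnn,
    fun m => ⟨blockStart h m, Nat.le_findGreatest ((blockStart_strictMono h).id_le m) le_rfl⟩,
    fun n => Nat.findGreatest_le n⟩

lemma completeBlocks_blockStart (m : ℕ) : completeBlocks h (blockStart h m) = m := by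
  have hm : m ≤ blockStart h m := (blockStart_strictMono h).id_le m
  refine le_antisymm ((blockStart_strictMono h).le_iff_le.1 ?_) (Nat.le_findGreatest hm le_rfl)
  exact Nat.findGreatest_spec (P := fun k => blockStart h k ≤ blockStart h m) hm le_rfl

def blockCoded (S : Finset ℕ) (m : ℕ) (t : ℕ → Bool) (n : ℕ) : Bool :=
  if n < blockStart h m then t n
  else if n < blockStart h (m + 1) then decide (n - blockStart h m ∈ S)
  else false

def blockDecode (m : ℕ) (z : ℕ → Bool) : Finset ℕ :=
  (Finset.range (h m)).filter fun j => z (blockStart h m + j)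

variable {h}

lemma blockCoded_vanishesFrom {S : Finset ℕ} {m : ℕ} {t : ℕ → Bool} :
    VanishesFrom (blockStart h (m + 1)) (blockCoded h S m t) := fun n hn => by
  have := blockStart_strictMono h (lt_add_one m)
  simp only [blockCoded]
  rw [if_neg (by omega), if_neg (by omega)]

lemma blockCoded_blockStart_add {S : Finset ℕ} {m : ℕ} {t : ℕ → Bool} {j : ℕ}
    (hj : j ≤ h m) : blockCoded h S m t (blockStart h m + j) = decide (j ∈ S) := by
  have hend : blockStart h (m + 1) = blockStart h m + (h m + 1) := rfl
  simp only [blockCoded]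
  rw [if_neg (by omega), if_pos (by omega), Nat.add_sub_cancel_left]

lemma blockDecode_blockCoded {S : Finset ℕ} {m : ℕ} (hS : S ⊆ Finset.range (h m))
    (t : ℕ → Bool) : blockDecode h m (blockCoded h S m t) = S := by
  ext j
  simp only [blockDecode, Finset.mem_filter, Finset.mem_range]
  constructor
  · rintro ⟨hj, hjS⟩
    rwa [blockCoded_blockStart_add hj.le, decide_eq_true_iff] at hjS
  · intro hjS
    have hj := Finset.mem_range.1 (hS hjS)
    rw [blockCoded_blockStart_add hj.le]
    exact ⟨hj, decide_eq_true hjS⟩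

variable (h)

/-- The set `A_E`. -/
def positiveSet (E : Finset (ℕ → ℕ)) : Set (ℕ → Bool) :=
  {z | ∃ m S t, (∀ x ∈ E, x m ∈ S) ∧ S ⊆ Finset.range (h m) ∧ S.card ≤ m ∧
    z = blockCoded h S m t}

variable {h}

lemma positiveSet_subset_QSet (E : Finset (ℕ → ℕ)) : positiveSet h E ⊆ QSet := by
  rintro _ ⟨m, S, t, -, -, -, rfl⟩
  exact blockCoded_vanishesFrom.mem_QSet

lemma positiveSet_anti {E E' : Finset (ℕ → ℕ)} (hEE' : E ⊆ E') :
    positiveSet h E' ⊆ positiveSet h E := by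
  rintro _ ⟨m, S, t, hES, hS⟩
  exact ⟨m, S, t, fun x hx => hES x (hEE' hx), hS⟩

lemma level_positiveSet {E : Finset (ℕ → ℕ)} (hE : ∀ x ∈ E, ∀ n, x n < h n) (n : ℕ) :
    level (positiveSet h E) n = 2 ^ n := by
  classical
  suffices himage : (fun z : ℕ → Bool => fun i : Fin n => z i) '' positiveSet h E = Set.univ by
    simp [level, himage, Set.ncard_univ]
  refine eq_univ_of_forall fun s => ?_
  let m := max E.card n
  let t i := if hi : i < n then s ⟨i, hi⟩ else false
  refine ⟨blockCoded h (E.image (· m)) m t, ⟨m, _, t, fun x hx => Finset.mem_image_of_mem _ hx,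
    ?_, Finset.card_image_le.trans (le_max_left _ _), rfl⟩, ?_⟩
  · simp only [Finset.subset_iff, Finset.mem_image, Finset.mem_range]
    rintro _ ⟨x, hx, rfl⟩
    exact hE x hx m
  · funext i
    have hi : (i : ℕ) < blockStart h m :=
      i.2.trans_le ((le_max_right _ _).trans ((blockStart_strictMono h).id_le m))
    simp [blockCoded, hi, t]

lemma positiveSet_not_mem_idealIQ {E : Finset (ℕ → ℕ)} (hE : ∀ x ∈ E, ∀ n, x n < h n)
    {f : ℕ → ℕ} (hf : ∀ n, f n ≤ n) : positiveSet h E ∉ idealIQ f := fun hmem => by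
  obtain ⟨n, hn⟩ := (hmem.2 1 le_rfl).exists
  rw [one_mul, level_positiveSet hE] at hn
  exact Nat.lt_two_pow_self.not_ge (hn.trans (hf n))

lemma isFilterBaseQ_range_positiveSet (D : Set (ℕ → ℕ)) :
    IsFilterBaseQ
      (range fun E : Finset D => positiveSet h (E.map (Function.Embedding.subtype _))) := by
  classical
  refine ⟨range_nonempty _, ?_, ?_⟩
  · rintro _ ⟨E, rfl⟩
    exact positiveSet_subset_QSet _
  · rintro _ ⟨E, rfl⟩ _ ⟨E', rfl⟩
    exact ⟨_, ⟨E ∪ E', rfl⟩,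
      subset_inter (positiveSet_anti (Finset.map_subset_map.2 Finset.subset_union_left))
        (positiveSet_anti (Finset.map_subset_map.2 Finset.subset_union_right))⟩

end Blocks

section Extraction

variable (h : ℕ → ℕ) (I : Set (ℕ → Bool))

def endingInBlock (m : ℕ) : Set (ℕ → Bool) := I ∩ {z | VanishesFrom (blockStart h (m + 1)) z}

lemma finite_endingInBlock (m : ℕ) : (endingInBlock h I m).Finite :=
  (finite_vanishesFrom _).subset inter_subset_right

/-- The guard on `endingInBlock` makes the width bound `card_extractedSlalom_le` hold for every
`m`. -/
noncomputable def extractedSlalom (m : ℕ) : Finset ℕ :=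
  if (endingInBlock h I m).ncard ≤ m + 1 then
    ((finite_endingInBlock h I m).toFinset.filter fun z => (blockDecode h m z).card ≤ m).biUnion
      (blockDecode h m)
  else ∅

lemma card_extractedSlalom_le (m : ℕ) : (extractedSlalom h I m).card ≤ (m + 1) * m := by
  classical
  unfold extractedSlalom
  split_ifs with hcount
  · refine (Finset.card_biUnion_le_card_mul _ _ m fun z hz => (Finset.mem_filter.1 hz).2).trans ?_
    gcongr
    calc _ ≤ (finite_endingInBlock h I m).toFinset.card := Finset.card_filter_le _ _
      _ = (endingInBlock h I m).ncard := (ncard_eq_toFinset_card _ _).symm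
      _ ≤ m + 1 := hcount
  · simp

variable {h I}

lemma mem_extractedSlalom {m : ℕ} (hcount : (endingInBlock h I m).ncard ≤ m + 1)
    {S : Finset ℕ} (hS : S ⊆ Finset.range (h m)) (hcard : S.card ≤ m) {t : ℕ → Bool}
    (hz : blockCoded h S m t ∈ I) {j : ℕ} (hj : j ∈ S) : j ∈ extractedSlalom h I m := by
  rw [extractedSlalom, if_pos hcount]
  refine Finset.mem_biUnion.2 ⟨blockCoded h S m t, Finset.mem_filter.2
    ⟨(finite_endingInBlock h I m).mem_toFinset.2 ⟨hz, blockCoded_vanishesFrom⟩, ?_⟩, ?_⟩ <;>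
  rwa [blockDecode_blockCoded hS]

lemma slalomCatches_of_mem_idealIQ {D : Set (ℕ → ℕ)} (hI : I ∈ idealIQ (completeBlocks h))
    (hinf : ∀ x ∈ D, (I ∩ positiveSet h {x}).Infinite) :
    SlalomCatches (fun m => (m + 1) * m) D := by
  obtain ⟨N, hN⟩ := eventually_atTop.1 (hI.2 1 le_rfl)
  refine ⟨extractedSlalom h I, card_extractedSlalom_le h I, fun x hx => ?_⟩
  let M := {m | ∃ S t, x m ∈ S ∧ S ⊆ Finset.range (h m) ∧ S.card ≤ m ∧ blockCoded h S m t ∈ I}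
  have hM : M.Infinite := fun hfin => hinf x hx <|
    (hfin.biUnion fun m _ => finite_endingInBlock h I m).subset <| by
      rintro _ ⟨hzI, m, S, t, hxS, hS, hcard, rfl⟩
      exact mem_biUnion ⟨S, t, hxS x (Finset.mem_singleton_self x), hS, hcard, hzI⟩
        ⟨hzI, blockCoded_vanishesFrom⟩
  refine (hM.sdiff (finite_lt_nat N)).mono ?_
  rintro m ⟨⟨S, t, hxS, hS, hcard, hz⟩, hmN⟩
  have hNm : N ≤ blockStart h (m + 1) :=
    (not_lt.1 hmN).trans (m.le_succ.trans ((blockStart_strictMono h).id_le _))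
  have hcount : (endingInBlock h I m).ncard ≤ m + 1 := calc
    _ ≤ level I (blockStart h (m + 1)) := ncard_inter_vanishesFrom_le_level I _
    _ ≤ completeBlocks h (blockStart h (m + 1)) := by simpa using hN _ hNm
    _ = m + 1 := completeBlocks_blockStart h _
  exact mem_extractedSlalom hcount hS hcard hz hxS

end Extraction

theorem slalomCatches_of_lt_geLaver {h : ℕ → ℕ} {D : Set (ℕ → ℕ)} (hD : ∀ x ∈ D, ∀ n, x n < h n)
    (hlt : #D < geLaver) : SlalomCatches (fun m => (m + 1) * m) D := by
  rcases D.finite_or_infinite with hfin | hinf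
  · exact slalomCatches_of_finite
      (tendsto_atTop_mono (fun m => Nat.le_mul_of_pos_left m m.succ_pos) tendsto_id) hfin
  have : Infinite D := hinf.to_subtype
  let F := range fun E : Finset D => positiveSet h (E.map (Function.Embedding.subtype _))
  have hFlt : #F < geI (completeBlocks h) := calc
    #F ≤ #(Finset D) := mk_range_le
    _ = #D := mk_finset_of_infinite D
    _ < geLaver := hlt
    _ ≤ geI (completeBlocks h) := csInf_le' ⟨_, memH_completeBlocks h, rfl⟩
  have hpos : ∀ A ∈ F, A ∉ idealIQ (completeBlocks h) := by
    rintro _ ⟨E, rfl⟩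
    refine positiveSet_not_mem_idealIQ ?_ (memH_completeBlocks h).2.2
    simp only [Finset.mem_map, Function.Embedding.coe_subtype]
    rintro _ ⟨x, -, rfl⟩
    exact hD x x.2
  obtain ⟨I, hI, hinfI⟩ :=
    exists_mem_idealIQ_infinite_inter (isFilterBaseQ_range_positiveSet D) hpos hFlt
  exact slalomCatches_of_mem_idealIQ hI fun x hx => hinfI _ ⟨{⟨x, hx⟩}, by simp⟩

theorem exists_infinitelyEqual_of_lt_geLaver {h : ℕ → ℕ} (hpos : ∀ n, 0 < h n)
    {D : Set (ℕ → ℕ)} (hD : ∀ x ∈ D, ∀ n, x n < h n) (hlt : #D < geLaver) :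
    ∃ u : ℕ → ℕ, (∀ n, u n < h n) ∧ ∀ x ∈ D, {n | u n = x n}.Infinite := by
  obtain ⟨h', hh'⟩ := exists_blockCode_lt (fun m => (m + 1) * m) h
  refine exists_infinitelyEqual_of_slalomCatches hpos hD (slalomCatches_of_lt_geLaver (h := h') ?_
    (mk_image_le.trans_lt hlt))
  rintro _ ⟨x, hx, rfl⟩
  exact hh' x (hD x hx)

lemma hasSMZ_of_lt_geLaver {X : Set (ℕ → Bool)} (hX : #X < geLaver) : HasSMZ X := by
  intro g
  let e n : (Fin (g n) → Bool) ≃ Fin (2 ^ g n) := Fintype.equivFinOfCardEq (by simp)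
  let code (x : ℕ → Bool) (n : ℕ) : ℕ := e n fun i => x i
  obtain ⟨u, hu, hinf⟩ := exists_infinitelyEqual_of_lt_geLaver (h := fun n => 2 ^ g n)
    (fun n => by positivity) (D := code '' X) (by rintro _ ⟨x, -, rfl⟩ n; exact (e n _).2)
    (mk_image_le.trans_lt hX)
  refine ⟨fun n => List.ofFn ((e n).symm ⟨u n, hu n⟩), fun n => List.length_ofFn, fun x hx => ?_⟩
  obtain ⟨n, hn⟩ := (hinf _ ⟨x, hx, rfl⟩).nonempty
  have hdecode : (e n).symm ⟨u n, hu n⟩ = fun i : Fin (g n) => x i :=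
    (e n).symm_apply_eq.2 (Fin.ext hn)
  refine mem_iUnion.2 ⟨n, fun i => ?_⟩
  simp [hdecode]

lemma not_hasSMZ_univ : ¬ HasSMZ Set.univ := fun hsmz => by
  obtain ⟨σ, hlen, hcover⟩ := hsmz (· + 1)
  have hlt n : n < (σ n).length := by rw [hlen]; omega
  obtain ⟨_, ⟨n, rfl⟩, hn⟩ := hcover (mem_univ fun n => !(σ n)[n]'(hlt n))
  simpa using hn ⟨n, hlt n⟩

lemma geLaver_le_nonSN : geLaver ≤ nonSN :=
  le_csInf ⟨_, Set.univ, not_hasSMZ_univ, rfl⟩ fun _ ⟨_, hX, hc⟩ =>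
    hc ▸ not_lt.1 fun hlt => hX (hasSMZ_of_lt_geLaver hlt)

theorem stmt_16 :
    (∀ κ : Cardinal, κ < geLaver →
      ∀ h : ℕ → ℕ, (∀ n, 0 < h n) →
        ∀ D : Set (ℕ → ℕ), (∀ x ∈ D, ∀ n, x n < h n) → Cardinal.mk D = κ →
          ∃ u : ℕ → ℕ, (∀ n, u n < h n) ∧ ∀ x ∈ D, {n | u n = x n}.Infinite) ∧
    geLaver ≤ nonSN :=
  ⟨fun _ hκ _ hpos _ hD hDκ => exists_infinitelyEqual_of_lt_geLaver hpos hD (hDκ ▸ hκ),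
    geLaver_le_nonSN⟩
end
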